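/- arXiv:2408.07685 — 5 statements merged into one kernel-verified Lean document; each statement's English description precedes it below -/
import Mathlib

section
/- Optimal duals recover the optimal selection, winning case (part of Theorem 3.1): suppose x is primal feasible and (δ, α) is dual feasible for the generalized bidding LP, the two objective values coincide, i.e., Σ_j (v_j − λ p_j) x_j = Σ_j δ_j + Σ_c α_c B^c, and λ + Σ_{c∈C} α_c > 0. Define the bid b_j := (v_j + Σ_{c∈C} α_c w_j^c) / (λ + Σ_{c∈C} α_c). Then for every query j with b_j > p_j, it holds that x_j = 1. -/
open Finset

/-- Optimal duals recover the optimal selection (winning case): if primal and dual feasible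
solutions have equal objective values, then the bidding formula
`b j = (v j + ∑ c, α c * w c j) / (lam + ∑ c, α c)` wins exactly the queries the optimal
primal solution selects: whenever `b j > p j`, we have `x j = 1`. -/
theorem optimal_duals_winning_case
    (m : ℕ) (C : Type*) [Fintype C]
    (v p : Fin m → ℝ) (lam : ℝ) (B : C → ℝ) (w : C → Fin m → ℝ)
    (hv : ∀ j, 0 ≤ v j) (hp : ∀ j, 0 ≤ p j) (hlam : 0 ≤ lam)
    (hB : ∀ c, 0 ≤ B c) (hw : ∀ c j, 0 ≤ w c j)
    (x : Fin m → ℝ) (δ : Fin m → ℝ) (α : C → ℝ)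
    (hx0 : ∀ j, 0 ≤ x j) (hx1 : ∀ j, x j ≤ 1)
    (hprimal : ∀ c, ∑ j, p j * x j ≤ B c + ∑ j, w c j * x j)
    (hδ : ∀ j, 0 ≤ δ j) (hα : ∀ c, 0 ≤ α c)
    (hdual : ∀ j, ∑ c, α c * (w c j - p j) + v j - lam * p j ≤ δ j)
    (hobj : ∑ j, (v j - lam * p j) * x j = ∑ j, δ j + ∑ c, α c * B c)
    (hpos : 0 < lam + ∑ c, α c)
    (b : Fin m → ℝ)
    (hb : ∀ j, b j = (v j + ∑ c, α c * w c j) / (lam + ∑ c, α c)) :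
    ∀ j, p j < b j → x j = 1 := by

  intro j hj
  -- δ j > 0
  have h1 : p j * (lam + ∑ c, α c) < v j + ∑ c, α c * w c j := by
    rw [hb j, lt_div_iff₀ hpos] at hj; linarith
  have h2 : ∑ c, α c * (w c j - p j) + v j - lam * p j
      = (v j + ∑ c, α c * w c j) - p j * (lam + ∑ c, α c) := by
    simp_rw [mul_sub]
    rw [Finset.sum_sub_distrib, ← Finset.sum_mul]
    ring
  have hδj : 0 < δ j := by
    have := hdual j
    rw [h2] at this
    linarith
  -- complementary slackness
  have hswap : ∑ i, (∑ c, α c * (w c i - p i)) * x i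
      = ∑ c, α c * ∑ i, (w c i - p i) * x i := by
    simp_rw [Finset.sum_mul, mul_assoc]
    rw [Finset.sum_comm]
    simp_rw [← Finset.mul_sum]
  have hexpand : ∑ i, (∑ c, α c * (w c i - p i) + v i - lam * p i) * x i
      = (∑ c, α c * ∑ i, (w c i - p i) * x i) + ∑ i, (v i - lam * p i) * x i := by
    rw [← hswap, ← Finset.sum_add_distrib]
    apply Finset.sum_congr rfl
    intro i _
    ring
  have hc : ∀ c, α c * (-B c) ≤ α c * ∑ i, (w c i - p i) * x i := by
    intro c
    apply mul_le_mul_of_nonneg_left _ (hα c)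
    have := hprimal c
    rw [show ∑ i, (w c i - p i) * x i = ∑ i, w c i * x i - ∑ i, p i * x i by
      rw [← Finset.sum_sub_distrib]; apply Finset.sum_congr rfl; intro i _; ring]
    linarith
  have hlow : -(∑ c, α c * B c) ≤ ∑ c, α c * ∑ i, (w c i - p i) * x i := by
    calc -(∑ c, α c * B c) = ∑ c, α c * (-B c) := by
          rw [← Finset.sum_neg_distrib]
          apply Finset.sum_congr rfl; intro c _; ring
      _ ≤ _ := Finset.sum_le_sum fun c _ => hc c
  have hsum1 : ∑ i, (∑ c, α c * (w c i - p i) + v i - lam * p i) * x i ≤ ∑ i, δ i * x i :=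
    Finset.sum_le_sum fun i _ => mul_le_mul_of_nonneg_right (hdual i) (hx0 i)
  have hsum2 : ∑ i, δ i * x i ≤ ∑ i, δ i :=
    Finset.sum_le_sum fun i _ => mul_le_of_le_one_right (hδ i) (hx1 i)
  have heq : ∑ i, δ i * x i = ∑ i, δ i := by
    have : ∑ i, δ i ≤ ∑ i, (∑ c, α c * (w c i - p i) + v i - lam * p i) * x i := by
      rw [hexpand]; linarith
    linarith
  have hzero : ∀ i ∈ Finset.univ, δ i - δ i * x i = 0 := by
    rw [← Finset.sum_eq_zero_iff_of_nonneg]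
    · rw [Finset.sum_sub_distrib, heq]; ring
    · intro i _
      have := mul_le_of_le_one_right (hδ i) (hx1 i)
      linarith
  have := hzero j (Finset.mem_univ j)
  have hxj : δ j * x j = δ j * 1 := by rw [mul_one]; linarith
  exact mul_left_cancel₀ (ne_of_gt hδj) hxj
end

section
/- Optimal duals recover the optimal selection, losing case (part of Theorem 3.1): suppose x is primal feasible and (δ, α) is dual feasible for the generalized bidding LP, the two objective values coincide, i.e., Σ_j (v_j − λ p_j) x_j = Σ_j δ_j + Σ_c α_c B^c, and λ + Σ_{c∈C} α_c > 0. Define the bid b_j := (v_j + Σ_{c∈C} α_c w_j^c) / (λ + Σ_{c∈C} α_c). Then for every query j with b_j < p_j, it holds that x_j = 0. -/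
open Finset

/-- Optimal duals recover the optimal selection (losing case): if primal and dual feasible
solutions have equal objective values, then the bidding formula
`b j = (v j + ∑ c, α c * w c j) / (lam + ∑ c, α c)` loses exactly the queries the optimal
primal solution rejects: whenever `b j < p j`, we have `x j = 0`. -/
theorem optimal_duals_losing_case
    (m : ℕ) (C : Type*) [Fintype C]
    (v p : Fin m → ℝ) (lam : ℝ) (B : C → ℝ) (w : C → Fin m → ℝ)
    (hv : ∀ j, 0 ≤ v j) (hp : ∀ j, 0 ≤ p j) (hlam : 0 ≤ lam)
    (hB : ∀ c, 0 ≤ B c) (hw : ∀ c j, 0 ≤ w c j)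
    (x : Fin m → ℝ) (δ : Fin m → ℝ) (α : C → ℝ)
    (hx0 : ∀ j, 0 ≤ x j) (hx1 : ∀ j, x j ≤ 1)
    (hprimal : ∀ c, ∑ j, p j * x j ≤ B c + ∑ j, w c j * x j)
    (hδ : ∀ j, 0 ≤ δ j) (hα : ∀ c, 0 ≤ α c)
    (hdual : ∀ j, ∑ c, α c * (w c j - p j) + v j - lam * p j ≤ δ j)
    (hobj : ∑ j, (v j - lam * p j) * x j = ∑ j, δ j + ∑ c, α c * B c)
    (hpos : 0 < lam + ∑ c, α c)
    (b : Fin m → ℝ)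
    (hb : ∀ j, b j = (v j + ∑ c, α c * w c j) / (lam + ∑ c, α c)) :
    ∀ j, b j < p j → x j = 0 := by
  intro j hbj
  -- slack at j is strictly positive
  have hsj : ∑ c, α c * (w c j - p j) + v j - lam * p j < 0 := by
    have h1 : v j + ∑ c, α c * w c j < (lam + ∑ c, α c) * p j := by
      rw [hb j, div_lt_iff₀ hpos] at hbj
      linarith
    have h2 : ∑ c, α c * (w c j - p j) = (∑ c, α c * w c j) - (∑ c, α c) * p j := by
      rw [Finset.sum_mul, ← Finset.sum_sub_distrib]
      exact Finset.sum_congr rfl fun c _ => by ring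
    linarith
  -- the complementary-slackness sum
  set T := ∑ k, x k * (δ k - (∑ c, α c * (w c k - p k) + v k - lam * p k)) with hT
  have hterm : ∀ k ∈ Finset.univ (α := Fin m),
      0 ≤ x k * (δ k - (∑ c, α c * (w c k - p k) + v k - lam * p k)) := by
    intro k _
    exact mul_nonneg (hx0 k) (by linarith [hdual k])
  have hTnonneg : 0 ≤ T := Finset.sum_nonneg hterm
  have expand : T = (∑ k, x k * δ k)
      - (∑ c, α c * ∑ k, x k * (w c k - p k))
      - ∑ k, (v k - lam * p k) * x k := by
    have hmid : ∑ k, x k * (∑ c, α c * (w c k - p k))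
        = ∑ c, α c * ∑ k, x k * (w c k - p k) := by
      simp_rw [Finset.mul_sum]
      rw [Finset.sum_comm]
      exact Finset.sum_congr rfl fun c _ => Finset.sum_congr rfl fun k _ => by ring
    calc T = ∑ k, (x k * δ k - x k * (∑ c, α c * (w c k - p k)) - (v k - lam * p k) * x k) := by
            exact Finset.sum_congr rfl fun k _ => by ring
      _ = (∑ k, x k * δ k) - (∑ k, x k * (∑ c, α c * (w c k - p k)))
            - ∑ k, (v k - lam * p k) * x k := by
            rw [← Finset.sum_sub_distrib, ← Finset.sum_sub_distrib]
      _ = _ := by rw [hmid]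
  have e1 : ∑ k, x k * δ k ≤ ∑ k, δ k := by
    apply Finset.sum_le_sum
    intro k _
    nlinarith [hx0 k, hx1 k, hδ k]
  have e2 : ∀ c, -(α c * ∑ k, x k * (w c k - p k)) ≤ α c * B c := by
    intro c
    have h3 : ∑ k, x k * (p k - w c k) ≤ B c := by
      have h4 : ∑ k, x k * (p k - w c k) = (∑ k, p k * x k) - ∑ k, w c k * x k := by
        rw [← Finset.sum_sub_distrib]
        exact Finset.sum_congr rfl fun k _ => by ring
      linarith [hprimal c]
    have h5 : -(∑ k, x k * (w c k - p k)) = ∑ k, x k * (p k - w c k) := by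
      rw [← Finset.sum_neg_distrib]
      exact Finset.sum_congr rfl fun k _ => by ring
    nlinarith [hα c]
  have e2' : -(∑ c, α c * ∑ k, x k * (w c k - p k)) ≤ ∑ c, α c * B c := by
    rw [← Finset.sum_neg_distrib]
    exact Finset.sum_le_sum fun c _ => e2 c
  have hTnonpos : T ≤ 0 := by
    rw [expand, hobj]
    linarith
  have hTzero : T = 0 := le_antisymm hTnonpos hTnonneg
  have hj : x j * (δ j - (∑ c, α c * (w c j - p j) + v j - lam * p j)) = 0 :=
    (Finset.sum_eq_zero_iff_of_nonneg hterm).mp hTzero j (Finset.mem_univ j)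
  have hfac : 0 < δ j - (∑ c, α c * (w c j - p j) + v j - lam * p j) := by
    linarith [hδ j]
  exact (mul_eq_zero.mp hj).resolve_right (ne_of_gt hfac)
end

section
/- Extremal solutions of the bidding LP are mostly integral: let P = { x ∈ ℝ^m : 0 ≤ x_j ≤ 1 for all j, and Σ_{j=1}^m p_j x_j ≤ B^c + Σ_{j=1}^m w_j^c x_j for every c ∈ C } be the feasible polytope of the generalized bidding LP, where C is a finite set. Then every extreme point x of P has at most |C| fractional coordinates, i.e., |{ j : 0 < x_j < 1 }| ≤ |C|. -/
/-!
If an extreme point `x` had more fractional coordinates than there are constraints, the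
`|C|` constraint functionals, restricted to the fractional coordinates, would have a nonzero
kernel vector `d`. Moving along `±d` keeps every constraint value unchanged and, for small
steps, keeps the fractional coordinates inside `(0, 1)`; so `x` is the midpoint of two
feasible points, contradicting extremality.
-/

open Finset Filter Topology

theorem eq_zero_of_mem_extremePoints_of_eventually_add_smul_mem {E : Type*} [AddCommGroup E]
    [Module ℝ E] {S : Set E} {x d : E} (hx : x ∈ S.extremePoints ℝ)
    (hd : ∀ᶠ t in 𝓝 (0 : ℝ), x + t • d ∈ S) : d = 0 := by
  have hd_neg : ∀ᶠ t in 𝓝 (0 : ℝ), x + (-t) • d ∈ S :=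
    (neg_zero (G := ℝ) ▸ tendsto_neg (0 : ℝ)).eventually hd
  obtain ⟨t, ⟨hplus, hminus⟩, ht⟩ :=
    (((hd.and hd_neg).filter_mono nhdsWithin_le_nhds).and
      (self_mem_nhdsWithin : ∀ᶠ t in 𝓝[≠] (0 : ℝ), t ≠ 0)).exists
  have hseg : x ∈ openSegment ℝ (x + t • d) (x + (-t) • d) :=
    ⟨1 / 2, 1 / 2, by norm_num, by norm_num, by norm_num, by module⟩
  have hfixed := (mem_extremePoints_iff_left.mp hx).2 _ hplus _ hminus hseg
  exact (smul_eq_zero.mp (add_eq_left.mp hfixed)).resolve_left ht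

theorem eventually_add_smul_mem_unitBox {ι : Type*} [Finite ι] {x d : ι → ℝ}
    (hx : ∀ j, 0 ≤ x j ∧ x j ≤ 1) (hd : ∀ j, ¬(0 < x j ∧ x j < 1) → d j = 0) :
    ∀ᶠ t in 𝓝 (0 : ℝ), ∀ j, 0 ≤ (x + t • d) j ∧ (x + t • d) j ≤ 1 := by
  refine eventually_all.2 fun j => ?_
  by_cases hxj : 0 < x j ∧ x j < 1
  · have hcont : Tendsto (fun t : ℝ => x j + t * d j) (𝓝 0) (𝓝 (x j)) := by
      simpa using ((continuous_const.add (continuous_id.mul continuous_const)).tendsto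
        (f := fun t : ℝ => x j + t * d j) 0)
    filter_upwards [hcont.eventually (Ioo_mem_nhds hxj.1 hxj.2)] with t ht
    exact ⟨ht.1.le, ht.2.le⟩
  · simp [hd j hxj, hx j]

theorem exists_ne_zero_sum_mul_eq_zero_of_card_lt {K ι C : Type*} [Field K] [Fintype ι]
    [Fintype C] (a : C → ι → K) {F : Finset ι} (hF : Fintype.card C < F.card) :
    ∃ d : ι → K, d ≠ 0 ∧ (∀ j ∉ F, d j = 0) ∧ ∀ c, ∑ j, a c j * d j = 0 := by
  classical
  have hdep : ¬LinearIndepOn K (fun j c => a c j) (F : Set ι) := fun h => by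
    have hle := h.fintype_card_le_finrank
    simp only [Finset.coe_sort_coe, Fintype.card_coe, Module.finrank_fintype_fun_eq_card] at hle
    omega
  obtain ⟨f, hf, j, hjF, hfj⟩ := not_linearIndepOn_finset_iff.mp hdep
  refine ⟨fun j => if j ∈ F then f j else 0, fun h => hfj (by simpa [hjF] using congrFun h j),
    fun j hj => if_neg hj, fun c => ?_⟩
  simpa [mul_comm, Finset.sum_apply] using congrFun hf c

theorem card_fractional_le_of_mem_extremePoints {ι C : Type*} [Fintype ι] [Fintype C]
    (a : C → ι → ℝ) (b : C → ℝ) {x : ι → ℝ}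
    (hx : x ∈ Set.extremePoints ℝ
      {x | (∀ j, 0 ≤ x j ∧ x j ≤ 1) ∧ ∀ c, ∑ j, a c j * x j ≤ b c}) :
    (univ.filter fun j => 0 < x j ∧ x j < 1).card ≤ Fintype.card C := by
  by_contra! hcard
  obtain ⟨d, hd, hd_supp, hd_ker⟩ := exists_ne_zero_sum_mul_eq_zero_of_card_lt a hcard
  have hbox := eventually_add_smul_mem_unitBox hx.1.1 fun j hj =>
    hd_supp j fun hjF => hj (mem_filter.mp hjF).2
  refine hd (eq_zero_of_mem_extremePoints_of_eventually_add_smul_mem hx ?_)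
  filter_upwards [hbox] with t ht
  refine ⟨ht, fun c => ?_⟩
  have hconst : ∑ j, a c j * (x + t • d) j = ∑ j, a c j * x j := by
    simp only [Pi.add_apply, Pi.smul_apply, smul_eq_mul, mul_add, sum_add_distrib,
      mul_left_comm _ t, ← mul_sum, hd_ker c, mul_zero, add_zero]
  exact hconst ▸ hx.1.2 c

theorem bidding_lp_extreme_points_mostly_integral_general
    (m : ℕ) (C : Type*) [Fintype C]
    (p : Fin m → ℝ) (B : C → ℝ) (w : C → Fin m → ℝ)
    (P : Set (Fin m → ℝ))
    (hP : P = {x | (∀ j, 0 ≤ x j ∧ x j ≤ 1) ∧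
      ∀ c, ∑ j, p j * x j ≤ B c + ∑ j, w c j * x j})
    (x : Fin m → ℝ) (hx : x ∈ Set.extremePoints ℝ P) :
    (Finset.univ.filter fun j => 0 < x j ∧ x j < 1).card ≤ Fintype.card C := by
  have hP' : P = {x | (∀ j, 0 ≤ x j ∧ x j ≤ 1) ∧ ∀ c, ∑ j, (p j - w c j) * x j ≤ B c} := by
    simp only [hP, sub_mul, sum_sub_distrib, sub_le_iff_le_add]
  exact card_fractional_le_of_mem_extremePoints _ B (hP' ▸ hx)

/-- Extremal solutions of the generalized bidding LP are mostly integral: every extreme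
point of the feasible polytope has at most `|C|` fractional coordinates. -/
theorem bidding_lp_extreme_points_mostly_integral
    (m : ℕ) (C : Type*) [Fintype C]
    (p : Fin m → ℝ) (B : C → ℝ) (w : C → Fin m → ℝ)
    (hp : ∀ j, 0 ≤ p j) (hB : ∀ c, 0 ≤ B c) (hw : ∀ c j, 0 ≤ w c j)
    (P : Set (Fin m → ℝ))
    (hP : P = {x | (∀ j, 0 ≤ x j ∧ x j ≤ 1) ∧
      ∀ c, ∑ j, p j * x j ≤ B c + ∑ j, w c j * x j})
    (x : Fin m → ℝ) (hx : x ∈ Set.extremePoints ℝ P) :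
    (Finset.univ.filter fun j => 0 < x j ∧ x j < 1).card ≤ Fintype.card C :=
  bidding_lp_extreme_points_mostly_integral_general m C p B w P hP x hx
end

section
/- Price of anarchy of the second-price auction under undominated bids is at most 2: consider n value-maximizing bidders and m single-slot second-price auctions with values v_ij ≥ 0 and RoS targets τ_i > 0. Suppose bids b_ij satisfy the undominatedness condition b_ij ≥ v_ij / τ_i for all i, j; the allocation x assigns each auction j fully to bidders with the highest bid (x_ij ∈ [0,1], Σ_i x_ij = 1, and x_ij > 0 only if b_ij = max_k b_kj); the payment of bidder i in auction j is p_ij = x_ij · max_{k≠i} b_kj; and every bidder's RoS constraint Σ_j x_ij v_ij ≥ τ_i Σ_j p_ij holds. Then for every feasible allocation y (y_ij ∈ [0,1], Σ_i y_ij ≤ 1 for all j), Σ_i Σ_j y_ij v_ij / τ_i ≤ 2 · Σ_i Σ_j x_ij v_ij / τ_i. -/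
open Finset

/-- The highest competing bid against bidder `i`: the maximum of `f k` over `k ≠ i`
(interpreted as `0` when there are no other bidders). -/
noncomputable def compMax (n : ℕ) (f : Fin n → ℝ) (i : Fin n) : ℝ :=
  ⨆ k ∈ Finset.univ.erase i, f k

lemma compMax_nonneg (n : ℕ) (f : Fin n → ℝ) (hf : ∀ k, 0 ≤ f k) (i : Fin n) :
    0 ≤ compMax n f i := by
  unfold compMax
  have hbdd : BddAbove (Set.range fun k => ⨆ _ : k ∈ Finset.univ.erase i, f k) :=
    (Set.finite_range _).bddAbove
  have hni : ¬ (i ∈ Finset.univ.erase i) := by simp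
  haveI : IsEmpty (i ∈ Finset.univ.erase i : Prop) := isEmpty_Prop.mpr hni
  calc (0:ℝ) = ⨆ _ : i ∈ Finset.univ.erase i, f i := (Real.iSup_of_isEmpty _).symm
    _ ≤ _ := le_ciSup hbdd i

lemma le_compMax (n : ℕ) (f : Fin n → ℝ) (i k : Fin n) (hk : k ≠ i) :
    f k ≤ compMax n f i := by
  unfold compMax
  have hbdd : BddAbove (Set.range fun k => ⨆ _ : k ∈ Finset.univ.erase i, f k) :=
    (Set.finite_range _).bddAbove
  have hmem : k ∈ Finset.univ.erase i := by simp [hk]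
  refine le_ciSup_of_le hbdd k ?_
  rw [ciSup_pos hmem]

/-- Price of anarchy of the second-price auction under undominated bids is at most 2:
with value-maximizing bidders whose bids satisfy `b i j ≥ v i j / τ i`, any second-price
outcome satisfying all RoS constraints has liquid welfare at least half of that of any
feasible allocation. -/
theorem spa_poa_le_two_of_undominated
    (n m : ℕ) (v : Fin n → Fin m → ℝ) (τ : Fin n → ℝ)
    (b x p : Fin n → Fin m → ℝ)
    (hv : ∀ i j, 0 ≤ v i j) (hτ : ∀ i, 0 < τ i)
    (hb : ∀ i j, v i j / τ i ≤ b i j)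
    (hx01 : ∀ i j, 0 ≤ x i j ∧ x i j ≤ 1)
    (hxfull : ∀ j, ∑ i, x i j = 1)
    (hwin : ∀ i j, 0 < x i j → ∀ k, b k j ≤ b i j)
    (hpay : ∀ i j, p i j = x i j * compMax n (fun k => b k j) i)
    (hros : ∀ i, τ i * ∑ j, p i j ≤ ∑ j, x i j * v i j)
    (y : Fin n → Fin m → ℝ)
    (hy01 : ∀ i j, 0 ≤ y i j ∧ y i j ≤ 1)
    (hyfeas : ∀ j, ∑ i, y i j ≤ 1) :
    ∑ i, ∑ j, y i j * v i j / τ i ≤ 2 * ∑ i, ∑ j, x i j * v i j / τ i := by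
  have hC : ∀ j w, 0 ≤ compMax n (fun k => b k j) w := fun j w =>
    compMax_nonneg n _ (fun k => le_trans (div_nonneg (hv k j) (hτ k).le) (hb k j)) w
  -- key per-auction bound
  have key : ∀ j, ∑ i, y i j * v i j / τ i ≤
      ∑ w, x w j * (v w j / τ w + compMax n (fun k => b k j) w) := by
    intro j
    have inner : ∀ w, ∑ i, y i j * v i j / τ i ≤ v w j / τ w + compMax n (fun k => b k j) w := by
      intro w
      have hsplit : ∑ i, y i j * v i j / τ i =
          y w j * v w j / τ w + ∑ i ∈ Finset.univ.erase w, y i j * v i j / τ i :=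
        (Finset.add_sum_erase _ _ (Finset.mem_univ w)).symm
      rw [hsplit]
      have h1 : y w j * v w j / τ w ≤ v w j / τ w := by
        rw [mul_div_assoc]
        exact mul_le_of_le_one_left (div_nonneg (hv w j) (hτ w).le) (hy01 w j).2
      have h2 : ∑ i ∈ Finset.univ.erase w, y i j * v i j / τ i ≤ compMax n (fun k => b k j) w := by
        calc ∑ i ∈ Finset.univ.erase w, y i j * v i j / τ i
            ≤ ∑ i ∈ Finset.univ.erase w, y i j * compMax n (fun k => b k j) w := by
              apply Finset.sum_le_sum
              intro i hi
              rw [mul_div_assoc]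
              exact mul_le_mul_of_nonneg_left
                (le_trans (hb i j) (le_compMax n (fun k => b k j) w i (Finset.ne_of_mem_erase hi)))
                (hy01 i j).1
          _ = (∑ i ∈ Finset.univ.erase w, y i j) * compMax n (fun k => b k j) w := by rw [Finset.sum_mul]
          _ ≤ 1 * compMax n (fun k => b k j) w := by
              apply mul_le_mul_of_nonneg_right _ (hC j w)
              calc ∑ i ∈ Finset.univ.erase w, y i j ≤ ∑ i, y i j :=
                    Finset.sum_le_sum_of_subset_of_nonneg (Finset.erase_subset _ _)
                      (fun i _ _ => (hy01 i j).1)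
                _ ≤ 1 := hyfeas j
          _ = compMax n (fun k => b k j) w := one_mul _
      linarith
    calc ∑ i, y i j * v i j / τ i = (∑ w, x w j) * ∑ i, y i j * v i j / τ i := by
          rw [hxfull j, one_mul]
      _ = ∑ w, x w j * ∑ i, y i j * v i j / τ i := Finset.sum_mul _ _ _
      _ ≤ ∑ w, x w j * (v w j / τ w + compMax n (fun k => b k j) w) :=
          Finset.sum_le_sum fun w _ =>
            mul_le_mul_of_nonneg_left (inner w) (hx01 w j).1
  have hp : ∀ w, ∑ j, p w j ≤ (∑ j, x w j * v w j) / τ w := by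
    intro w
    rw [le_div_iff₀ (hτ w)]
    linarith [hros w, mul_comm (∑ j, p w j) (τ w)]
  calc ∑ i, ∑ j, y i j * v i j / τ i = ∑ j, ∑ i, y i j * v i j / τ i :=
        Finset.sum_comm
    _ ≤ ∑ j, ∑ w, x w j * (v w j / τ w + compMax n (fun k => b k j) w) :=
        Finset.sum_le_sum fun j _ => key j
    _ = ∑ w, ∑ j, (x w j * v w j / τ w + p w j) := by
        rw [Finset.sum_comm]
        refine Finset.sum_congr rfl fun w _ => Finset.sum_congr rfl fun j _ => ?_
        rw [hpay w j]; ring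
    _ = ∑ w, ((∑ j, x w j * v w j / τ w) + ∑ j, p w j) := by
        refine Finset.sum_congr rfl fun w _ => Finset.sum_add_distrib
    _ ≤ ∑ w, 2 * ∑ j, x w j * v w j / τ w := by
        refine Finset.sum_le_sum fun w _ => ?_
        have : ∑ j, x w j * v w j / τ w = (∑ j, x w j * v w j) / τ w := by
          rw [Finset.sum_div]
        rw [this]
        linarith [hp w]
    _ = 2 * ∑ i, ∑ j, x i j * v i j / τ i := (Finset.mul_sum _ _ _).symm
end

section
/- Price of anarchy of the first-price auction under the better-than-bidding-values condition is at most 2: consider n value-maximizing bidders and m single-slot first-price auctions with values v_ij ≥ 0 and RoS targets τ_i > 0, bids b_ij ≥ 0, an allocation x that assigns each auction j fully to bidders with the highest bid (x_ij ∈ [0,1], Σ_i x_ij = 1, x_ij > 0 only if b_ij = max_k b_kj), and first-price payments p_ij = x_ij · b_ij. Suppose every bidder's RoS constraint Σ_j x_ij v_ij ≥ τ_i Σ_j p_ij holds and every bidder i satisfies the better-than-bidding-values condition: Σ_j x_ij v_ij ≥ Σ_{j : v_ij/τ_i > max_{k≠i} b_kj} v_ij (i.e., bidder i's obtained value is at least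 the value it would obtain by instead bidding v_ij/τ_i in every auction and winning exactly the auctions where this bid strictly exceeds all competing bids). Then for every feasible allocation y (y_ij ∈ [0,1], Σ_i y_ij ≤ 1 for all j), Σ_i Σ_j y_ij v_ij / τ_i ≤ 2 · Σ_i Σ_j x_ij v_ij / τ_i. -/
open Finset

/-- Price of anarchy of the first-price auction under the better-than-bidding-values
condition is at most 2: if in a first-price outcome every bidder satisfies its RoS
constraint and obtains at least the value it would obtain by instead bidding `v i j / τ i`
everywhere (winning exactly the auctions where this strictly exceeds all competing bids),
then the liquid welfare of the outcome is at least half of that of any feasible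
allocation. -/
theorem fpa_poa_le_two_of_btv
    (n m : ℕ) (v : Fin n → Fin m → ℝ) (τ : Fin n → ℝ)
    (b x p : Fin n → Fin m → ℝ)
    (hv : ∀ i j, 0 ≤ v i j) (hτ : ∀ i, 0 < τ i)
    (hb : ∀ i j, 0 ≤ b i j)
    (hx01 : ∀ i j, 0 ≤ x i j ∧ x i j ≤ 1)
    (hxfull : ∀ j, ∑ i, x i j = 1)
    (hwin : ∀ i j, 0 < x i j → ∀ k, b k j ≤ b i j)
    (hpay : ∀ i j, p i j = x i j * b i j)
    (hros : ∀ i, τ i * ∑ j, p i j ≤ ∑ j, x i j * v i j)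
    (hbtv : ∀ i,
      ∑ j, (if compMax n (fun k => b k j) i < v i j / τ i then v i j else 0)
        ≤ ∑ j, x i j * v i j)
    (y : Fin n → Fin m → ℝ)
    (hy01 : ∀ i j, 0 ≤ y i j ∧ y i j ≤ 1)
    (hyfeas : ∀ j, ∑ i, y i j ≤ 1) :
    ∑ i, ∑ j, y i j * v i j / τ i ≤ 2 * ∑ i, ∑ j, x i j * v i j / τ i := by
  rcases Nat.eq_zero_or_pos n with hn | hn
  · subst hn; simp
  have ne : (Finset.univ : Finset (Fin n)).Nonempty := ⟨⟨0, hn⟩, mem_univ _⟩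
  set B : Fin m → ℝ := fun j => Finset.univ.sup' ne (fun k => b k j) with hBdef
  have hB0 : ∀ j, 0 ≤ B j := fun j =>
    le_trans (hb ⟨0, hn⟩ j) (le_sup' (fun k => b k j) (mem_univ _))
  have hbB : ∀ k j, b k j ≤ B j := fun k j => le_sup' (fun k => b k j) (mem_univ k)
  have hcompB : ∀ i j, compMax n (fun k => b k j) i ≤ B j := by
    intro i j
    unfold compMax
    refine Real.iSup_le (fun k => Real.iSup_le (fun _ => hbB k j) (hB0 j)) (hB0 j)
  have hwinB : ∀ i j, 0 < x i j → b i j = B j := by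
    intro i j h
    exact le_antisymm (hbB i j) (Finset.sup'_le _ (fun k => b k j) (fun k _ => hwin i j h k))
  -- pointwise bound
  have key : ∀ i j, y i j * v i j / τ i ≤
      (if compMax n (fun k => b k j) i < v i j / τ i then v i j else 0) / τ i
        + y i j * B j := by
    intro i j
    have hτi := hτ i
    have hy0 := (hy01 i j).1
    have hy1 := (hy01 i j).2
    have hvτ : 0 ≤ v i j / τ i := div_nonneg (hv i j) hτi.le
    by_cases h : compMax n (fun k => b k j) i < v i j / τ i
    · simp only [if_pos h]
      have h1 : y i j * v i j / τ i ≤ v i j / τ i := by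
        rw [mul_div_assoc]
        nlinarith
      have h2 : 0 ≤ y i j * B j := mul_nonneg hy0 (hB0 j)
      linarith
    · simp only [if_neg h]
      have h1 : v i j / τ i ≤ B j := le_trans (not_lt.mp h) (hcompB i j)
      have h2 : y i j * (v i j / τ i) ≤ y i j * B j := by
        exact mul_le_mul_of_nonneg_left h1 hy0
      rw [mul_div_assoc]
      simp only [zero_div]
      linarith
  calc ∑ i, ∑ j, y i j * v i j / τ i
      ≤ ∑ i, ∑ j, ((if compMax n (fun k => b k j) i < v i j / τ i then v i j else 0) / τ i
          + y i j * B j) := by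
        exact Finset.sum_le_sum (fun i _ => Finset.sum_le_sum (fun j _ => key i j))
    _ = ∑ i, ((∑ j, (if compMax n (fun k => b k j) i < v i j / τ i then v i j else 0)) / τ i
          + ∑ j, y i j * B j) := by
        refine Finset.sum_congr rfl fun i _ => ?_
        rw [Finset.sum_add_distrib, Finset.sum_div]
    _ = ∑ i, (∑ j, (if compMax n (fun k => b k j) i < v i j / τ i then v i j else 0)) / τ i
          + ∑ j, ∑ i, y i j * B j := by
        rw [Finset.sum_add_distrib]
        congr 1
        exact Finset.sum_comm
    _ ≤ ∑ i, (∑ j, x i j * v i j) / τ i + ∑ j, B j := by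
        refine add_le_add (Finset.sum_le_sum fun i _ => ?_)
          (Finset.sum_le_sum fun j _ => ?_)
        · exact div_le_div_of_nonneg_right (hbtv i) (hτ i).le
        · calc ∑ i, y i j * B j = (∑ i, y i j) * B j := by rw [Finset.sum_mul]
            _ ≤ 1 * B j := mul_le_mul_of_nonneg_right (hyfeas j) (hB0 j)
            _ = B j := one_mul _
    _ ≤ ∑ i, (∑ j, x i j * v i j) / τ i + ∑ i, (∑ j, x i j * v i j) / τ i := by
        gcongr
        calc ∑ j, B j = ∑ j, ∑ i, x i j * B j := by
              refine Finset.sum_congr rfl (fun j _ => ?_)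
              rw [← Finset.sum_mul, hxfull, one_mul]
          _ = ∑ j, ∑ i, p i j := by
              refine Finset.sum_congr rfl (fun j _ => Finset.sum_congr rfl (fun i _ => ?_))
              rcases lt_or_eq_of_le (hx01 i j).1 with h | h
              · rw [hpay, hwinB i j h]
              · rw [hpay, ← h, zero_mul, zero_mul]
          _ = ∑ i, ∑ j, p i j := Finset.sum_comm
          _ ≤ ∑ i, (∑ j, x i j * v i j) / τ i := by
              refine Finset.sum_le_sum (fun i _ => ?_)
              rw [le_div_iff₀ (hτ i), mul_comm]
              exact hros i
    _ = 2 * ∑ i, ∑ j, x i j * v i j / τ i := by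
        have : ∀ i, (∑ j, x i j * v i j) / τ i = ∑ j, x i j * v i j / τ i := by
          intro i; rw [Finset.sum_div]
        simp only [this]
        ring
end
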